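/- (Proposition 3: robustness.) Assume X has full column rank p, and there exist c < ℓₙ(0) and c₀ > 0 such that min over β ∈ L_c of λ_min[n⁻¹XᵀΣ(Xβ)X] is at least c₀, and let β* denote the unique global maximizer of ℓₙ (assumed to exist). If β̂ = (β̂₁,…,β̂_p)ᵀ is a local maximizer of the SCAD-penalized likelihood Qₙ with β̂ ∈ L_c and min_{1≤j≤p} |β̂_j| > (a + 1/(2c₀))λₙ, then β̂ is the global maximizer of Qₙ on ℝᵖ and β̂ = β*. -/

import Mathlib

open Matrix Set

noncomputable section

/-- GLM log-likelihood `ℓₙ(β) = n⁻¹[yᵀXβ − Σᵢ b((Xβ)ᵢ)]`. -/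
def ell (n p : ℕ) (X : Matrix (Fin n) (Fin p) ℝ) (y : Fin n → ℝ) (b : ℝ → ℝ)
    (β : Fin p → ℝ) : ℝ :=
  (n : ℝ)⁻¹ * ((∑ i, y i * X.mulVec β i) - ∑ i, b (X.mulVec β i))

/-- `Σ(θ) = diag{b″(θ₁),…,b″(θₙ)}`. -/
def SigM (n : ℕ) (b : ℝ → ℝ) (θ : Fin n → ℝ) : Matrix (Fin n) (Fin n) ℝ :=
  Matrix.diagonal fun i => iteratedDeriv 2 b (θ i)

/-- Smallest eigenvalue of a symmetric real matrix, via the Rayleigh quotient on the unit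
sphere. -/
def lambdaMin {ι : Type} [Fintype ι] (M : Matrix ι ι ℝ) : ℝ :=
  sInf {r : ℝ | ∃ v : ι → ℝ, (∑ i, (v i) ^ 2) = 1 ∧ r = v ⬝ᵥ M.mulVec v}

/-- Derivative of the SCAD penalty: `p_λ′(u) = λ[1{u ≤ λ} + (aλ−u)₊/((a−1)λ)·1{u > λ}]`. -/
def scadDeriv (l a u : ℝ) : ℝ :=
  l * ((if u ≤ l then 1 else 0) + max (a * l - u) 0 / ((a - 1) * l) * (if l < u then 1 else 0))

/-- The SCAD penalty `p_λ(t) = ∫₀ᵗ p_λ′(u) du`. -/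
def scad (l a t : ℝ) : ℝ := ∫ u in (0:ℝ)..t, scadDeriv l a u

/-- SCAD-penalized likelihood `Qₙ(β) = ℓₙ(β) − Σⱼ p_{λₙ}(|βⱼ|)`. -/
def Qscad (n p : ℕ) (X : Matrix (Fin n) (Fin p) ℝ) (y : Fin n → ℝ) (b : ℝ → ℝ)
    (lam a : ℝ) (β : Fin p → ℝ) : ℝ :=
  ell n p X y b β - ∑ j, scad lam a |β j|

/-!
At `β̂` every coordinate lies beyond `aλ`, where the SCAD penalty is flat, so `β̂` is a local
maximizer of `ℓₙ`. As `b` is convex, `ℓₙ` is concave and `L_c` is convex, so the segment from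
`β̂` to any `β ∈ L_c` stays in `L_c`, where the curvature bound makes `t ↦ ℓₙ(β̂ + t(β - β̂))`
have second derivative at most `-c₀‖β - β̂‖²`. Together with the critical point at `t = 0` this
gives `ℓₙ(β) + c₀‖β - β̂‖²/2 ≤ ℓₙ(β̂)`, hence `β̂ = β*`. Beyond the threshold `(a + 1/(2c₀))λ`
the penalty saved by moving from `β̂` to `β` is at most `c₀‖β - β̂‖²/2`, so `Qₙ(β) ≤ Qₙ(β̂)` on
`L_c`; off `L_c`, `Qₙ(β) ≤ ℓₙ(β) < c < ℓₙ(0) = Qₙ(0) ≤ Qₙ(β̂)`.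
-/

section Scad

variable {l a : ℝ}

lemma scadDeriv_nonneg (hl : 0 < l) (ha : 1 < a) (u : ℝ) : 0 ≤ scadDeriv l a u := by
  have : 0 < (a - 1) * l := by nlinarith
  unfold scadDeriv
  positivity

lemma scadDeriv_le (hl : 0 < l) (ha : 1 < a) (u : ℝ) : scadDeriv l a u ≤ l := by
  have hal : 0 < (a - 1) * l := by nlinarith
  unfold scadDeriv
  rcases le_or_gt u l with hu | hu
  · simp [hu, not_lt.2 hu]
  · have : max (a * l - u) 0 / ((a - 1) * l) ≤ 1 :=
      (div_le_one hal).2 (max_le (by linarith) hal.le)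
    simp only [not_le.2 hu, hu, if_false, if_true, zero_add, mul_one]
    exact mul_le_of_le_one_right hl.le this

lemma scadDeriv_eq_zero (hl : 0 < l) (ha : 1 < a) {u : ℝ} (hu : a * l ≤ u) :
    scadDeriv l a u = 0 := by
  have hlu : l < u := by nlinarith
  simp [scadDeriv, not_le.2 hlu, hlu, max_eq_right (sub_nonpos.2 hu)]

lemma measurable_scadDeriv (l a : ℝ) : Measurable (scadDeriv l a) := by
  unfold scadDeriv
  refine Measurable.const_mul (Measurable.add ?_ (Measurable.mul ?_ ?_)) l
  · exact Measurable.ite measurableSet_Iic measurable_const measurable_const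
  · exact ((measurable_const.sub measurable_id).max measurable_const).div_const _
  · exact Measurable.ite measurableSet_Ioi measurable_const measurable_const

lemma intervalIntegrable_scadDeriv (hl : 0 < l) (ha : 1 < a) (s t : ℝ) :
    IntervalIntegrable (scadDeriv l a) MeasureTheory.volume s t := by
  refine IntervalIntegrable.mono_fun' (g := fun _ => l) intervalIntegrable_const
    (measurable_scadDeriv l a).aestronglyMeasurable (Filter.Eventually.of_forall fun u => ?_)
  simpa [abs_of_nonneg (scadDeriv_nonneg hl ha u)] using scadDeriv_le hl ha u

lemma scad_sub_scad (hl : 0 < l) (ha : 1 < a) (s t : ℝ) :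
    scad l a t - scad l a s = ∫ u in s..t, scadDeriv l a u := by
  rw [scad, scad, sub_eq_iff_eq_add', intervalIntegral.integral_add_adjacent_intervals
    (intervalIntegrable_scadDeriv hl ha 0 s) (intervalIntegrable_scadDeriv hl ha s t)]

@[simp]
lemma scad_zero (l a : ℝ) : scad l a 0 = 0 := by
  simp [scad]

lemma monotone_scad (hl : 0 < l) (ha : 1 < a) : Monotone (scad l a) := fun s t hst => by
  have := intervalIntegral.integral_nonneg (μ := MeasureTheory.volume) hst
    fun u _ => scadDeriv_nonneg hl ha u
  linarith [scad_sub_scad hl ha s t]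

lemma scad_nonneg (hl : 0 < l) (ha : 1 < a) {t : ℝ} (ht : 0 ≤ t) : 0 ≤ scad l a t :=
  scad_zero l a ▸ monotone_scad hl ha ht

lemma scad_sub_scad_le (hl : 0 < l) (ha : 1 < a) {s t : ℝ} (hst : s ≤ t) :
    scad l a t - scad l a s ≤ l * (t - s) := by
  rw [scad_sub_scad hl ha]
  calc ∫ u in s..t, scadDeriv l a u ≤ ∫ _ in s..t, l :=
        intervalIntegral.integral_mono_on hst (intervalIntegrable_scadDeriv hl ha s t)
          intervalIntegrable_const fun u _ => scadDeriv_le hl ha u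
    _ = l * (t - s) := by simp [mul_comm]

lemma scad_eq_of_le (hl : 0 < l) (ha : 1 < a) {t : ℝ} (ht : a * l ≤ t) :
    scad l a t = scad l a (a * l) := by
  have hzero : ∫ u in (a * l)..t, scadDeriv l a u = 0 := by
    rw [intervalIntegral.integral_congr (g := fun _ => 0) fun u hu =>
      scadDeriv_eq_zero hl ha (uIcc_of_le ht ▸ hu).1]
    simp
  linarith [scad_sub_scad hl ha (a * l) t]

lemma scad_sub_scad_le_sq {c₀ : ℝ} (hl : 0 < l) (ha : 1 < a) (hc₀ : 0 < c₀) {s : ℝ}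
    (hs : (a + 1 / (2 * c₀)) * l < s) (r : ℝ) :
    scad l a s - scad l a r ≤ c₀ / 2 * (s - r) ^ 2 := by
  have hmargin : a * l + l / (2 * c₀) < s := by
    calc a * l + l / (2 * c₀) = (a + 1 / (2 * c₀)) * l := by ring
      _ < s := hs
  have has : a * l ≤ s := by linarith [div_pos hl (mul_pos two_pos hc₀)]
  rw [scad_eq_of_le hl ha has]
  rcases le_or_gt r (a * l) with hr | hr
  · calc scad l a (a * l) - scad l a r ≤ l * (a * l - r) := scad_sub_scad_le hl ha hr
      _ ≤ l * ((s - r) - l / (2 * c₀)) := mul_le_mul_of_nonneg_left (by linarith) hl.le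
      _ ≤ c₀ / 2 * (s - r) ^ 2 := by
        -- AM-GM, which consumes the margin `λ/(2c₀)` in the threshold
        have : c₀ / 2 * (s - r) ^ 2 - l * ((s - r) - l / (2 * c₀))
            = (c₀ * (s - r) - l) ^ 2 / (2 * c₀) := by
          field_simp
          ring
        linarith [show 0 ≤ (c₀ * (s - r) - l) ^ 2 / (2 * c₀) by positivity]
  · rw [← scad_eq_of_le hl ha hr.le, sub_self]
    positivity

end Scad

lemma add_half_le_of_deriv_zero_of_deriv2_le {g g' g'' : ℝ → ℝ} {m : ℝ}
    (hg : ∀ t, HasDerivAt g (g' t) t) (hg' : ∀ t, HasDerivAt g' (g'' t) t) (h0 : g' 0 = 0)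
    (hm : ∀ t ∈ Icc (0 : ℝ) 1, g'' t ≤ -m) :
    g 1 + m / 2 ≤ g 0 := by
  have hφ' (t : ℝ) : HasDerivAt (fun s => g' s + m * s) (g'' t + m) t := by
    simpa using (hg' t).fun_add ((hasDerivAt_id' t).const_mul m)
  have hφ (t : ℝ) : HasDerivAt (fun s => g s + m / 2 * s ^ 2) (g' t + m * t) t := by
    refine ((hg t).fun_add ((hasDerivAt_pow 2 t).const_mul (m / 2))).congr_deriv ?_
    ring
  have hφ'_anti : AntitoneOn (fun s => g' s + m * s) (Icc 0 1) :=
    antitoneOn_of_hasDerivWithinAt_nonpos (convex_Icc 0 1)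
      (fun t _ => (hφ' t).continuousAt.continuousWithinAt)
      (fun t _ => (hφ' t).hasDerivWithinAt)
      (fun t ht => by linarith [hm t (interior_subset ht)])
  have hφ_anti : AntitoneOn (fun s => g s + m / 2 * s ^ 2) (Icc 0 1) :=
    antitoneOn_of_hasDerivWithinAt_nonpos (convex_Icc 0 1)
      (fun t _ => (hφ t).continuousAt.continuousWithinAt)
      (fun t _ => (hφ t).hasDerivWithinAt)
      (fun t ht => by
        simpa [h0] using hφ'_anti (left_mem_Icc.2 zero_le_one) (interior_subset ht)
          (interior_subset ht).1)
  simpa using hφ_anti (left_mem_Icc.2 zero_le_one) (right_mem_Icc.2 zero_le_one) zero_le_one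

lemma mul_sum_sq_le_of_le_lambdaMin {ι : Type} [Fintype ι] {M : Matrix ι ι ℝ} {r : ℝ}
    (hr : 0 < r) (hM : r ≤ lambdaMin M) (v : ι → ℝ) :
    r * ∑ i, v i ^ 2 ≤ v ⬝ᵥ M *ᵥ v := by
  set K := ∑ i, v i ^ 2
  rcases (Finset.sum_nonneg fun i _ => sq_nonneg (v i) : 0 ≤ K).eq_or_lt with hK | hK
  · have hv : v = 0 := funext fun i => by
      simpa using (Finset.sum_eq_zero_iff_of_nonneg fun i _ => sq_nonneg (v i)).1 hK.symm i
    simp [K, hv]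
  · set k := (Real.sqrt K)⁻¹
    have hk : k ^ 2 = K⁻¹ := by rw [inv_pow, Real.sq_sqrt hK.le]
    have hunit : ∑ i, (k • v) i ^ 2 = 1 := by
      simp only [Pi.smul_apply, smul_eq_mul, mul_pow, ← Finset.mul_sum, hk]
      exact inv_mul_cancel₀ hK.ne'
    have hbdd : BddBelow {t : ℝ | ∃ u : ι → ℝ, ∑ i, u i ^ 2 = 1 ∧ t = u ⬝ᵥ M *ᵥ u} := by
      -- otherwise `lambdaMin M` is the junk value `sInf = 0`, contradicting `0 < r ≤ lambdaMin M`
      by_contra h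
      rw [lambdaMin, Real.sInf_of_not_bddBelow h] at hM
      linarith
    have : r ≤ (v ⬝ᵥ M *ᵥ v) / K := by
      calc r ≤ (k • v) ⬝ᵥ M *ᵥ (k • v) := hM.trans (csInf_le hbdd ⟨k • v, hunit, rfl⟩)
        _ = (v ⬝ᵥ M *ᵥ v) / K := by
          rw [mulVec_smul, smul_dotProduct, dotProduct_smul, smul_smul, smul_eq_mul, ← sq, hk,
            div_eq_inv_mul]
    rwa [le_div_iff₀ hK] at this

section GLM

variable {n p : ℕ} {X : Matrix (Fin n) (Fin p) ℝ} {y : Fin n → ℝ} {b : ℝ → ℝ}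

variable (n p X b) in
/-- Minus the Hessian of `ℓₙ` at `β`. -/
def fisherInfo (β : Fin p → ℝ) : Matrix (Fin p) (Fin p) ℝ :=
  (n : ℝ)⁻¹ • (Xᵀ * SigM n b (X *ᵥ β) * X)

variable (n p X y b) in
def ellDirDeriv (β v : Fin p → ℝ) : ℝ :=
  (n : ℝ)⁻¹ * ∑ i, (y i - deriv b ((X *ᵥ β) i)) * (X *ᵥ v) i

lemma dotProduct_fisherInfo_mulVec (β v : Fin p → ℝ) :
    v ⬝ᵥ fisherInfo n p X b β *ᵥ v
      = (n : ℝ)⁻¹ * ∑ i, iteratedDeriv 2 b ((X *ᵥ β) i) * (X *ᵥ v) i ^ 2 := by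
  rw [fisherInfo, smul_mulVec, dotProduct_smul, smul_eq_mul, SigM, ← mulVec_mulVec,
    ← mulVec_mulVec, dotProduct_mulVec, vecMul_transpose]
  simp only [dotProduct, mulVec_diagonal]
  exact congrArg _ (Finset.sum_congr rfl fun i _ => by ring)

lemma mulVec_add_smul (β v : Fin p → ℝ) (t : ℝ) (i : Fin n) :
    (X *ᵥ (β + t • v)) i = (X *ᵥ β) i + t * (X *ᵥ v) i := by
  simp [mulVec_add, mulVec_smul]

lemma hasDerivAt_mulVec_line (β v : Fin p → ℝ) (t : ℝ) (i : Fin n) :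
    HasDerivAt (fun s => (X *ᵥ (β + s • v)) i) ((X *ᵥ v) i) t := by
  simpa only [mulVec_add_smul] using (hasDerivAt_mul_const _).const_add _

lemma hasDerivAt_ell_line (hb : Differentiable ℝ b) (β v : Fin p → ℝ) (t : ℝ) :
    HasDerivAt (fun s => ell n p X y b (β + s • v)) (ellDirDeriv n p X y b (β + t • v) v) t := by
  have hθ := hasDerivAt_mulVec_line (X := X) β v t
  have hlin := HasDerivAt.fun_sum (u := Finset.univ) fun i _ => (hθ i).const_mul (y i)
  have hcum := HasDerivAt.fun_sum (u := Finset.univ) fun i _ => (hb _).hasDerivAt.comp t (hθ i)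
  refine ((hlin.sub hcum).const_mul (n : ℝ)⁻¹).congr_deriv ?_
  simp only [ellDirDeriv, sub_mul, Finset.sum_sub_distrib]

lemma hasDerivAt_ellDirDeriv_line (hb : ContDiff ℝ 2 b) (β v : Fin p → ℝ) (t : ℝ) :
    HasDerivAt (fun s => ellDirDeriv n p X y b (β + s • v) v)
      (-(v ⬝ᵥ fisherInfo n p X b (β + t • v) *ᵥ v)) t := by
  have hb' : Differentiable ℝ (deriv b) := by
    simpa using hb.differentiable_iteratedDeriv 1 (by norm_num)
  have hθ := hasDerivAt_mulVec_line (X := X) β v t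
  have hsum := HasDerivAt.fun_sum (u := Finset.univ) fun i _ =>
    (((hb' _).hasDerivAt.comp t (hθ i)).const_sub (y i)).mul_const ((X *ᵥ v) i)
  refine (hsum.const_mul (n : ℝ)⁻¹).congr_deriv ?_
  rw [dotProduct_fisherInfo_mulVec, iteratedDeriv_succ, iteratedDeriv_one]
  simp only [← mul_neg, ← Finset.sum_neg_distrib]
  exact congrArg _ (Finset.sum_congr rfl fun i _ => by ring)

lemma concaveOn_ell (hb : ConvexOn ℝ univ b) : ConcaveOn ℝ univ (ell n p X y b) := by
  let coord (i : Fin n) : (Fin p → ℝ) →ₗ[ℝ] ℝ := LinearMap.proj i ∘ₗ X.mulVecLin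
  have hterm (i : Fin n) : ConcaveOn ℝ univ (y i • ⇑(coord i) - b ∘ coord i) :=
    ((y i • coord i).concaveOn convex_univ).sub (by simpa using hb.comp_linearMap (coord i))
  have hsum : ConcaveOn ℝ univ (∑ i, (y i • ⇑(coord i) - b ∘ coord i)) :=
    Finset.sum_induction _ (ConcaveOn ℝ univ) (fun _ _ => ConcaveOn.add)
      (concaveOn_const 0 convex_univ) fun i _ => hterm i
  have hell : ell n p X y b = (n : ℝ)⁻¹ • ∑ i, (y i • ⇑(coord i) - b ∘ coord i) := by
    ext β
    simp [ell, coord, Finset.sum_sub_distrib]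
  exact hell ▸ hsum.smul (inv_nonneg.2 (Nat.cast_nonneg n))

lemma ell_add_sq_le_of_isLocalMax (hb : ContDiff ℝ 2 b)
    (hconc : ConcaveOn ℝ univ (ell n p X y b))
    {c c₀ : ℝ} (hc₀ : 0 < c₀)
    (hcurv : ∀ β, c ≤ ell n p X y b β → c₀ ≤ lambdaMin (fisherInfo n p X b β))
    {β₁ β₂ : Fin p → ℝ} (hmax : IsLocalMax (ell n p X y b) β₁) (h₁ : c ≤ ell n p X y b β₁)
    (h₂ : c ≤ ell n p X y b β₂) :
    ell n p X y b β₂ + c₀ / 2 * ∑ j, (β₂ j - β₁ j) ^ 2 ≤ ell n p X y b β₁ := by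
  set v := β₂ - β₁
  have hg := hasDerivAt_ell_line (X := X) (y := y) (hb.differentiable (by norm_num)) β₁ v
  have hseg (t : ℝ) (ht : t ∈ Icc (0 : ℝ) 1) : c ≤ ell n p X y b (β₁ + t • v) :=
    ((hconc.convex_ge c).segment_subset ⟨mem_univ _, h₁⟩ ⟨mem_univ _, h₂⟩
      (segment_eq_image' ℝ β₁ β₂ ▸ mem_image_of_mem _ ht)).2
  have hcrit : ellDirDeriv n p X y b (β₁ + (0 : ℝ) • v) v = 0 := by
    have hmax' : IsLocalMax (ell n p X y b) (β₁ + (0 : ℝ) • v) := by simpa using hmax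
    exact (hmax'.comp_continuous (g := fun s : ℝ => β₁ + s • v) (by fun_prop)).hasDerivAt_eq_zero
      (hg 0)
  have := add_half_le_of_deriv_zero_of_deriv2_le hg (hasDerivAt_ellDirDeriv_line hb β₁ v) hcrit
    (m := c₀ * ∑ j, v j ^ 2)
    fun t ht => neg_le_neg (mul_sum_sq_le_of_le_lambdaMin hc₀ (hcurv _ (hseg t ht)) v)
  simpa [v, mul_assoc, mul_div_right_comm] using this

end GLM

section Penalty

variable {n p : ℕ} {X : Matrix (Fin n) (Fin p) ℝ} {y : Fin n → ℝ} {b : ℝ → ℝ} {l a : ℝ}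

lemma Qscad_le_ell (hl : 0 < l) (ha : 1 < a) (β : Fin p → ℝ) :
    Qscad n p X y b l a β ≤ ell n p X y b β :=
  sub_le_self _ (Finset.sum_nonneg fun j _ => scad_nonneg hl ha (abs_nonneg (β j)))

lemma Qscad_zero (l a : ℝ) : Qscad n p X y b l a 0 = ell n p X y b 0 := by
  simp [Qscad]

lemma isLocalMax_ell_of_isLocalMax_Qscad (hl : 0 < l) (ha : 1 < a) {β : Fin p → ℝ}
    (hβ : ∀ j, a * l < |β j|) (hmax : IsLocalMax (Qscad n p X y b l a) β) :
    IsLocalMax (ell n p X y b) β := by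
  have hflat : ∀ᶠ γ in nhds β, ∀ j, a * l < |γ j| := Filter.eventually_all.2 fun j =>
    ((continuous_apply j).abs.tendsto β).eventually_const_lt (hβ j)
  filter_upwards [hmax, hflat] with γ hγ hγflat
  have hpen : ∑ j, scad l a |γ j| = ∑ j, scad l a |β j| := Finset.sum_congr rfl fun j _ => by
    rw [scad_eq_of_le hl ha (hγflat j).le, scad_eq_of_le hl ha (hβ j).le]
  simp only [Qscad, hpen] at hγ
  linarith

lemma sum_scad_sub_sum_scad_le {c₀ : ℝ} (hl : 0 < l) (ha : 1 < a) (hc₀ : 0 < c₀)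
    {β : Fin p → ℝ} (hβ : ∀ j, (a + 1 / (2 * c₀)) * l < |β j|) (γ : Fin p → ℝ) :
    ∑ j, scad l a |β j| - ∑ j, scad l a |γ j| ≤ c₀ / 2 * ∑ j, (γ j - β j) ^ 2 := by
  rw [← Finset.sum_sub_distrib, Finset.mul_sum]
  refine Finset.sum_le_sum fun j _ => (scad_sub_scad_le_sq hl ha hc₀ (hβ j) _).trans ?_
  refine mul_le_mul_of_nonneg_left (sq_le_sq.2 ?_) (by positivity)
  simpa [abs_sub_comm] using abs_abs_sub_abs_le_abs_sub (β j) (γ j)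

end Penalty

theorem prop3_robustness_general
    (n p : ℕ)
    (X : Matrix (Fin n) (Fin p) ℝ) (y : Fin n → ℝ)
    (b : ℝ → ℝ) (hb : ContDiff ℝ 2 b) (hb'' : ∀ t : ℝ, 0 < iteratedDeriv 2 b t)
    (lam a : ℝ) (hlam : 0 < lam) (ha : 2 < a)
    (c c₀ : ℝ) (hc : c < ell n p X y b 0) (hc₀ : 0 < c₀)
    (hcurv : ∀ β : Fin p → ℝ, c ≤ ell n p X y b β →
      c₀ ≤ lambdaMin ((n : ℝ)⁻¹ • (Xᵀ * SigM n b (X.mulVec β) * X)))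
    (βstar : Fin p → ℝ)
    (hstaruniq : ∀ β : Fin p → ℝ, IsMaxOn (ell n p X y b) Set.univ β → β = βstar)
    (βh : Fin p → ℝ)
    (hloc : IsLocalMax (Qscad n p X y b lam a) βh)
    (hin : c ≤ ell n p X y b βh)
    (hbig : ∀ j : Fin p, (a + 1 / (2 * c₀)) * lam < |βh j|) :
    (∀ β : Fin p → ℝ, Qscad n p X y b lam a β ≤ Qscad n p X y b lam a βh) ∧
    βh = βstar := by
  have ha₁ : 1 < a := by linarith
  have hflat (j : Fin p) : a * lam < |βh j| := by
    linarith [hbig j, show 0 < 1 / (2 * c₀) * lam by positivity]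
  have hconvex : ConvexOn ℝ univ b :=
    convexOn_univ_of_deriv2_nonneg (hb.differentiable (by norm_num))
      (by simpa using hb.differentiable_iteratedDeriv 1 (by norm_num))
      fun t => by simpa [iteratedDeriv_eq_iterate] using (hb'' t).le
  have hgap (β : Fin p → ℝ) (hβ : c ≤ ell n p X y b β) :=
    ell_add_sq_le_of_isLocalMax hb (concaveOn_ell hconvex) hc₀ hcurv
      (isLocalMax_ell_of_isLocalMax_Qscad hlam ha₁ hflat hloc) hin hβ
  have hmax : IsMaxOn (ell n p X y b) univ βh := fun β _ => by
    rcases le_or_gt c (ell n p X y b β) with hβ | hβ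
    · exact le_of_add_le_of_nonneg_left (hgap β hβ) (by positivity)
    · exact (hβ.trans_le hin).le
  have hQ (β : Fin p → ℝ) (hβ : c ≤ ell n p X y b β) :
      Qscad n p X y b lam a β ≤ Qscad n p X y b lam a βh := by
    have := sum_scad_sub_sum_scad_le hlam ha₁ hc₀ hbig β
    simp only [Qscad]
    linarith [hgap β hβ]
  refine ⟨fun β => ?_, hstaruniq βh hmax⟩
  rcases le_or_gt c (ell n p X y b β) with hβ | hβ
  · exact hQ β hβ
  · calc Qscad n p X y b lam a β ≤ ell n p X y b β := Qscad_le_ell hlam ha₁ β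
      _ ≤ ell n p X y b 0 := by linarith
      _ = Qscad n p X y b lam a 0 := (Qscad_zero lam a).symm
      _ ≤ Qscad n p X y b lam a βh := hQ 0 hc.le

/-- Proposition 3 (robustness).  A local maximizer of the SCAD-penalized
likelihood lying in the sublevel set and with all components large is the global maximizer
and coincides with the unpenalized MLE. -/
theorem prop3_robustness
    (n p : ℕ) (hn : 1 ≤ n) (hp : 1 ≤ p)
    (X : Matrix (Fin n) (Fin p) ℝ) (y : Fin n → ℝ)
    (b : ℝ → ℝ) (hb : ContDiff ℝ 2 b) (hb'' : ∀ t : ℝ, 0 < iteratedDeriv 2 b t)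
    (lam a : ℝ) (hlam : 0 < lam) (ha : 2 < a)
    (hrank : X.rank = p)
    (c c₀ : ℝ) (hc : c < ell n p X y b 0) (hc₀ : 0 < c₀)
    (hcurv : ∀ β : Fin p → ℝ, c ≤ ell n p X y b β →
      c₀ ≤ lambdaMin ((n : ℝ)⁻¹ • (Xᵀ * SigM n b (X.mulVec β) * X)))
    (βstar : Fin p → ℝ)
    (hstar : IsMaxOn (ell n p X y b) Set.univ βstar)
    (hstaruniq : ∀ β : Fin p → ℝ, IsMaxOn (ell n p X y b) Set.univ β → β = βstar)
    (βh : Fin p → ℝ)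
    (hloc : IsLocalMax (Qscad n p X y b lam a) βh)
    (hin : c ≤ ell n p X y b βh)
    (hbig : ∀ j : Fin p, (a + 1 / (2 * c₀)) * lam < |βh j|) :
    (∀ β : Fin p → ℝ, Qscad n p X y b lam a β ≤ Qscad n p X y b lam a βh) ∧
    βh = βstar :=
  prop3_robustness_general n p X y b hb hb'' lam a hlam ha c c₀ hc hc₀ hcurv βstar hstaruniq βh hloc
    hin hbig

end
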